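/- Let U ⊆ ℂ be open, N : U → ℍ smooth with Re N = 0 and N² = −1 pointwise. Let μ ∈ ℂ with μ ∉ {0, 1}, a = (μ+μ⁻¹)/2, b = i(μ⁻¹−μ)/2 ∈ ℂ ⊂ ℍ. Let φ : U → ℍ be smooth and nowhere vanishing, T = ½(N·φ·(a−1)·φ⁻¹ + φ·b·φ⁻¹), and suppose ∂xφ = ½(N_x − N·N_y)·T·φ and ∂yφ = ½(N_y + N·N_x)·T·φ on U. Set â = φ·a·φ⁻¹. Then T satisfies the Riccati-type equations ∂xT = ½(N_x + N·N_y)·(â−1)/2 − T·½(N_x − N·N_y)·T and ∂yT = ½(N_y − N·N_x)·(â−1)/2 − T·½(N_y + N·N_x)·T on U. (Equation (5.3) of the paper: dT = (dN)''(â−1)/2 − T(dN)'T.) -/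

import Mathlib

/- Equation (5.3) of the paper: the Riccati-type equation
dT = (dN)''(â−1)/2 − T(dN)'T satisfied by T along a d_μ-parallel section. -/

noncomputable section
open Complex

local notation "ℍ" => Quaternion ℝ

/-- Embedding of ℂ into ℍ as the real span of 1 and i. -/
def cq (z : ℂ) : ℍ := ⟨z.re, z.im, 0, 0⟩

/-- a = (μ+μ⁻¹)/2. -/
def aμ (μ : ℂ) : ℂ := (μ + μ⁻¹) / 2

/-- b = i(μ⁻¹−μ)/2. -/
def bμ (μ : ℂ) : ℂ := Complex.I * (μ⁻¹ - μ) / 2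

/-- Partial derivative in the direction 1 (the x-direction). -/
def dx (f : ℂ → ℍ) (z : ℂ) : ℍ := fderiv ℝ f z 1

/-- Partial derivative in the direction i (the y-direction). -/
def dy (f : ℂ → ℍ) (z : ℂ) : ℍ := fderiv ℝ f z Complex.I

/-- T = ½(N·φ·(a−1)·φ⁻¹ + φ·b·φ⁻¹). -/
def Tmap (N φ : ℂ → ℍ) (μ : ℂ) (z : ℂ) : ℍ :=
  (N z * (φ z * cq (aμ μ - 1) * (φ z)⁻¹) + φ z * cq (bμ μ) * (φ z)⁻¹) / 2

/-- â = φ·a·φ⁻¹. -/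
def ahat (φ : ℂ → ℍ) (μ : ℂ) (z : ℂ) : ℍ := φ z * cq (aμ μ) * (φ z)⁻¹

/-! Write T = ½(Nα + β) with α = φ(a−1)φ⁻¹ and β = φbφ⁻¹. Along a parallel section dφ = PTφ,
where P = (dN)', conjugates by φ move by commutators: dα = ⁅PT, α⁆ and dβ = ⁅PT, β⁆; and N² = −1
makes dN, hence P, anticommute with N. Since α and β are conjugates of commuting complex numbers
with a² + b² = 1, one gets α = NTα − Tβ, and then N⁅PT, α⁆ + ⁅PT, β⁆ = −Pα − 2TPT. What is left
is dN·α − Pα = (dN)''α. -/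

open Filter Topology

section
variable {𝕜 E : Type*} [NontriviallyNormedField 𝕜] [NormedAddCommGroup E] [NormedSpace 𝕜 E]

theorem mul_fderiv_eq_neg_fderiv_mul_of_mul_self_eventuallyEq {R : Type*} [NormedRing R]
    [NormedAlgebra 𝕜 R] {f : E → R} {z : E} (hf : DifferentiableAt 𝕜 f z) {c : R}
    (hc : ∀ᶠ u in 𝓝 z, f u * f u = c) (v : E) :
    f z * fderiv 𝕜 f z v = -(fderiv 𝕜 f z v * f z) := by
  have h := fderiv_fun_mul' hf hf
  rw [EventuallyEq.fderiv_eq (f := fun _ => c) hc, fderiv_fun_const] at h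
  exact eq_neg_of_add_eq_zero_left (by simpa using (congrArg (· v) h).symm)

theorem fderiv_conj_apply {R : Type*} [NormedDivisionRing R] [NormedAlgebra 𝕜 R]
    {f : E → R} {z : E} (hf : DifferentiableAt 𝕜 f z) (hz : f z ≠ 0) (c : R) (v : E) :
    fderiv 𝕜 (fun u => f u * c * (f u)⁻¹) z v
      = ⁅fderiv 𝕜 f z v * (f z)⁻¹, f z * c * (f z)⁻¹⁆ := by
  have hinv : fderiv 𝕜 (fun u => (f u)⁻¹) z v = -((f z)⁻¹ * fderiv 𝕜 f z v * (f z)⁻¹) := by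
    rw [show (fun u => (f u)⁻¹) = Inv.inv ∘ f from rfl, fderiv_comp z (differentiableAt_inv hz) hf,
      fderiv_inv' hz]
    simp
  rw [fderiv_fun_mul' (hf.mul_const c) (hf.fun_inv hz), fderiv_mul_const' hf]
  simp only [MulOpposite.op_inv, add_apply, smul_apply, hinv, mul_assoc, smul_eq_mul, mul_neg,
    MulOpposite.smul_eq_mul_unop, MulOpposite.unop_op, MulOpposite.unop_inv, Ring.lie_def, ne_eq, hz,
    not_false_eq_true, inv_mul_cancel_left₀]
  abel

end

theorem riccati_identity {R : Type*} [DivisionRing R] [CharZero R] {n p q α β t : R}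
    (hn : n * n = -1) (hp : n * p = -(p * n)) (hq : n * q = -(q * n))
    (hαβ : Commute α β) (hrel : 2 * α + α * α + β * β = 0) (ht : 2 * t = n * α + β) :
    (p * α + n * ⁅(p - n * q) / 2 * t, α⁆ + ⁅(p - n * q) / 2 * t, β⁆) / 2
      = (p + n * q) / 2 * (α / 2) - t * ((p - n * q) / 2 * t) := by
  set P := (p - n * q) / 2
  have hP : n * P = -(P * n) := by
    have h2 : Commute n (2 : R)⁻¹ := (Commute.ofNat_right n 2).inv_right₀
    have hanti : n * (p - n * q) = -((p - n * q) * n) :=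
      calc n * (p - n * q) = n * p - (n * n) * q := by noncomm_ring
        _ = -(p * n) + q := by rw [hp, hn]; noncomm_ring
        _ = -((p - n * q) * n) := by rw [sub_mul, hq, neg_mul, mul_assoc, hn]; noncomm_ring
    simp only [P, div_eq_mul_inv, ← mul_assoc, hanti, neg_mul, neg_inj]
    rw [mul_assoc, mul_assoc, h2.eq]
  have hPQ : p - P = (p + n * q) / 2 := by
    simp only [P]
    rw [eq_div_iff two_ne_zero, sub_mul, div_mul_cancel₀ _ two_ne_zero, mul_two]
    abel
  have hNtα : n * t * α - t * β = α := by
    have : 2 * (n * t * α - t * β - α) = 0 := by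
      calc 2 * (n * t * α - t * β - α) = n * (2 * t) * α - (2 * t) * β - 2 * α := by noncomm_ring
        _ = -(2 * α + α * α + β * β) + n * (β * α - α * β) + (n * n + 1) * (α * α) := by
          rw [ht]; noncomm_ring
        _ = 0 := by rw [hrel, hαβ.eq, hn]; noncomm_ring
    rw [← sub_eq_zero]
    simpa using this
  have hcomm : n * ⁅P * t, α⁆ + ⁅P * t, β⁆ = -(P * α) - 2 * t * (P * t) := by
    calc n * ⁅P * t, α⁆ + ⁅P * t, β⁆
        = (n * P) * t * α + P * t * β - (n * α + β) * (P * t) := by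
          simp only [Ring.lie_def]; noncomm_ring
      _ = -(P * (n * t * α - t * β)) - 2 * t * (P * t) := by rw [hP, ← ht]; noncomm_ring
      _ = -(P * α) - 2 * t * (P * t) := by rw [hNtα]
  calc (p * α + n * ⁅P * t, α⁆ + ⁅P * t, β⁆) / 2
      = ((p - P) * α - 2 * t * (P * t)) / 2 := by rw [add_assoc, hcomm]; noncomm_ring
    _ = (p + n * q) / 2 * (α / 2) - t * (P * t) := by
      rw [hPQ, sub_div, mul_assoc 2, mul_div_assoc, mul_div_assoc 2, two_mul, add_halves]

instance : CharZero ℍ := charZero_of_injective_algebraMap (algebraMap ℝ ℍ).injective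

def cqRingHom : ℂ →+* ℍ where
  toFun := cq
  map_one' := by ext <;> simp [cq, Quaternion.re_one, Quaternion.imI_one, Quaternion.imJ_one,
    Quaternion.imK_one]
  map_mul' z w := by
    ext <;> simp only [Quaternion.re_mul, Quaternion.imI_mul, Quaternion.imJ_mul,
      Quaternion.imK_mul] <;> simp [cq]
  map_zero' := by ext <;> simp [cq, Quaternion.re_zero, Quaternion.imI_zero, Quaternion.imJ_zero,
    Quaternion.imK_zero]
  map_add' z w := by ext <;> simp only [Quaternion.re_add, Quaternion.imI_add, Quaternion.imJ_add,
    Quaternion.imK_add] <;> simp [cq]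

def conjCq (p : ℍ) (hp : p ≠ 0) : ℂ →+* ℍ :=
  (MulSemiringAction.toRingHom (ConjAct ℍˣ) ℍ (ConjAct.toConjAct (Units.mk0 p hp))).comp cqRingHom

theorem conjCq_apply {p : ℍ} (hp : p ≠ 0) (c : ℂ) : conjCq p hp c = p * cq c * p⁻¹ := by
  simp [conjCq, cqRingHom, ConjAct.units_smul_def]

theorem aμ_sq_add_bμ_sq {μ : ℂ} (hμ : μ ≠ 0) : aμ μ ^ 2 + bμ μ ^ 2 = 1 := by
  simp only [aμ, bμ]
  field_simp
  ring_nf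
  rw [I_sq]
  ring

theorem map_aμ_sub_one_bμ_relation {R : Type*} [Ring R] (ρ : ℂ →+* R) {μ : ℂ} (hμ : μ ≠ 0) :
    2 * ρ (aμ μ - 1) + ρ (aμ μ - 1) * ρ (aμ μ - 1) + ρ (bμ μ) * ρ (bμ μ) = 0 := by
  rw [← map_ofNat ρ 2, ← map_mul, ← map_mul, ← map_mul, ← map_add, ← map_add,
    show 2 * (aμ μ - 1) + (aμ μ - 1) * (aμ μ - 1) + bμ μ * bμ μ = 0 by
      linear_combination aμ_sq_add_bμ_sq hμ, map_zero]

theorem fderiv_Tmap_apply {N φ : ℂ → ℍ} {z : ℂ} (μ : ℂ) (hN : DifferentiableAt ℝ N z)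
    (hφ : DifferentiableAt ℝ φ z) (hφz : φ z ≠ 0) (v : ℂ) :
    fderiv ℝ (Tmap N φ μ) z v =
      (fderiv ℝ N z v * (φ z * cq (aμ μ - 1) * (φ z)⁻¹)
        + N z * ⁅fderiv ℝ φ z v * (φ z)⁻¹, φ z * cq (aμ μ - 1) * (φ z)⁻¹⁆
        + ⁅fderiv ℝ φ z v * (φ z)⁻¹, φ z * cq (bμ μ) * (φ z)⁻¹⁆) / 2 := by
  have hconj (c : ℍ) : DifferentiableAt ℝ (fun u => φ u * c * (φ u)⁻¹) z := by
    fun_prop (disch := exact hφz)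
  have hT : Tmap N φ μ = fun u =>
      (N u * (φ u * cq (aμ μ - 1) * (φ u)⁻¹) + φ u * cq (bμ μ) * (φ u)⁻¹) * (2 : ℍ)⁻¹ :=
    funext fun u => div_eq_mul_inv _ _
  rw [hT, fderiv_mul_const' (by fun_prop (disch := exact hφz)),
    fderiv_fun_add (by fun_prop (disch := exact hφz)) (hconj _), fderiv_fun_mul' hN (hconj _)]
  simp only [add_apply, smul_apply, fderiv_conj_apply hφ hφz, smul_eq_mul,
    MulOpposite.smul_eq_mul_unop, MulOpposite.unop_op, div_eq_mul_inv]
  noncomm_ring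

theorem fderiv_Tmap_apply_eq_riccati {N φ : ℂ → ℍ} {μ z : ℂ} (hμ : μ ≠ 0)
    (hN : DifferentiableAt ℝ N z) (hNsq : ∀ᶠ u in 𝓝 z, N u * N u = -1)
    (hφ : DifferentiableAt ℝ φ z) (hφz : φ z ≠ 0) {v : ℂ}
    (hv : fderiv ℝ φ z v
      = (fderiv ℝ N z v - N z * fderiv ℝ N z (I * v)) / 2 * Tmap N φ μ z * φ z) :
    fderiv ℝ (Tmap N φ μ) z v
      = (fderiv ℝ N z v + N z * fderiv ℝ N z (I * v)) / 2 * ((ahat φ μ z - 1) / 2)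
        - Tmap N φ μ z * ((fderiv ℝ N z v - N z * fderiv ℝ N z (I * v)) / 2 * Tmap N φ μ z) := by
  set ρ := conjCq (φ z) hφz
  have hα : ahat φ μ z - 1 = ρ (aμ μ - 1) := by
    rw [map_sub, map_one, conjCq_apply, ahat]
  have hT : 2 * Tmap N φ μ z = N z * ρ (aμ μ - 1) + ρ (bμ μ) := by
    rw [Tmap, conjCq_apply, conjCq_apply, two_mul, add_halves]
  have hw : fderiv ℝ φ z v * (φ z)⁻¹
      = (fderiv ℝ N z v - N z * fderiv ℝ N z (I * v)) / 2 * Tmap N φ μ z := by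
    rw [hv, mul_inv_cancel_right₀ hφz]
  rw [fderiv_Tmap_apply μ hN hφ hφz, hw, hα, ← conjCq_apply hφz, ← conjCq_apply hφz]
  have hanti := mul_fderiv_eq_neg_fderiv_mul_of_mul_self_eventuallyEq hN hNsq
  exact riccati_identity hNsq.self_of_nhds (hanti _) (hanti _) ((Commute.all _ _).map ρ)
    (map_aμ_sub_one_bμ_relation ρ hμ) hT

theorem stmt_4 (U : Set ℂ) (hU : IsOpen U)
    (N : ℂ → ℍ) (hsmooth : ContDiffOn ℝ (⊤ : ℕ∞) N U)
    (hsq : ∀ z ∈ U, N z * N z = -1)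
    (μ : ℂ) (hμ0 : μ ≠ 0)
    (φ : ℂ → ℍ) (hφsmooth : ContDiffOn ℝ (⊤ : ℕ∞) φ U)
    (hφ0 : ∀ z ∈ U, φ z ≠ 0)
    (hparx : ∀ z ∈ U, dx φ z = ((dx N z - N z * dy N z) / 2) * Tmap N φ μ z * φ z)
    (hpary : ∀ z ∈ U, dy φ z = ((dy N z + N z * dx N z) / 2) * Tmap N φ μ z * φ z) :
    ∀ z ∈ U,
      dx (Tmap N φ μ) z
        = ((dx N z + N z * dy N z) / 2) * ((ahat φ μ z - 1) / 2)
          - Tmap N φ μ z * (((dx N z - N z * dy N z) / 2) * Tmap N φ μ z)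
      ∧ dy (Tmap N φ μ) z
        = ((dy N z - N z * dx N z) / 2) * ((ahat φ μ z - 1) / 2)
          - Tmap N φ μ z * (((dy N z + N z * dx N z) / 2) * Tmap N φ μ z) := by
  intro z hz
  have hN : DifferentiableAt ℝ N z :=
    (hsmooth.contDiffAt (hU.mem_nhds hz)).differentiableAt (by simp)
  have hφ : DifferentiableAt ℝ φ z :=
    (hφsmooth.contDiffAt (hU.mem_nhds hz)).differentiableAt (by simp)
  have hNsq : ∀ᶠ u in 𝓝 z, N u * N u = -1 := eventually_of_mem (hU.mem_nhds hz) hsq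
  have riccati := fun v => fderiv_Tmap_apply_eq_riccati (v := v) hμ0 hN hNsq hφ (hφ0 z hz)
  constructor
  · simpa [dx, dy] using riccati 1 (by simpa [dx, dy] using hparx z hz)
  · simpa [dx, dy, ← sub_eq_add_neg] using riccati I (by simpa [dx, dy] using hpary z hz)
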